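/- Let s ≥ 3 and g ≥ 2 be integers and set r = 2s. For each integer j with 0 ≤ j ≤ s, let U_j = {0, 1, …, s} \ {j} and let Π_j denote the product over all unordered pairs {a, b} of distinct elements of U_j of 16·sin²(π(a−b)/r)·sin²(π(a+b)/r). Then 2·[ Σ_{j=1}^{s−1} (4·r^s / Π_j)^{g−1} + 2^{1−2g}·( (4·r^s / Π_0)^{g−1} + (4·r^s / Π_s)^{g−1} ) ] = r^g. -/

import Mathlib

/-!
Write `w(a, b)` for the factor of `Π` attached to a pair `{a, b}`, `D` for the product of all
`w(a, b)` over pairs in `{0, …, s}`, and `E_j = ∏_{b ≠ j} w(j, b)`. Then `Π_j · E_j = D`, and since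
`w` is symmetric, `D² = ∏_j E_j`.

With `F(m) = 4 sin²(πm/2s) = |1 - ζ^m|²` for `ζ = exp(iπ/s)` we have `w(a, b) = F(b - a) F(a + b)`,
so each `E_j` is a product of runs of consecutive values of `F`. The reflection
`F(2s - m) = F(m)`, the duplication formula `F(j) F(s - j) = F(2j)` and
`∏_{0<m<2s} F(m) = |∏_{0<m<2s} (1 - ζ^m)|² = (2s)²` give `E_j = (2s)²` for `0 < j < s` and
`E_0 = E_s = 4(2s)²`. Hence `D = 4(2s)^(s+1)`, the terms `4(2s)^s / Π_j` equal `2s` for `0 < j < s`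
and `8s` for `j = 0, s`, and the sum collapses to `(2s)^g`.
-/

open Real Finset

/-- `Π_j` for the root system `D_s` at level 2: the product over unordered pairs
`{a,b}` of distinct elements of `U_j = {0,…,s} \ {j}` of
`16·sin²(π(a−b)/(2s))·sin²(π(a+b)/(2s))`. -/
noncomputable def PiDs (s j : ℕ) : ℝ :=
  ∏ p ∈ ((Finset.range (s + 1)).erase j).offDiag.filter (fun p => p.1 < p.2),
    (16 * Real.sin (Real.pi * ((p.1 : ℝ) - (p.2 : ℝ)) / (2 * s)) ^ 2 *
      Real.sin (Real.pi * ((p.1 : ℝ) + (p.2 : ℝ)) / (2 * s)) ^ 2)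

section PairProducts

variable {α M : Type*} [LinearOrder α] [CommMonoid M]

theorem prod_offDiag_lt_eq_mul_prod_erase {w : α → α → M} (hw : ∀ a b, w a b = w b a)
    {t : Finset α} {j : α} (hj : j ∈ t) :
    ∏ p ∈ t.offDiag with p.1 < p.2, w p.1 p.2 =
      (∏ p ∈ (t.erase j).offDiag with p.1 < p.2, w p.1 p.2) * ∏ b ∈ t.erase j, w j b := by
  rw [← prod_filter_not_mul_prod_filter _ (fun p => p.1 = j ∨ p.2 = j), filter_filter]
  congr 1
  · congr 1
    ext p
    grind
  · refine prod_nbij' (fun p => if p.1 = j then p.2 else p.1) (fun b => (min j b, max j b))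
      ?_ ?_ ?_ ?_ ?_ <;> grind

theorem prod_offDiag_lt_sq {w : α → α → M} (hw : ∀ a b, w a b = w b a) (t : Finset α) :
    (∏ p ∈ t.offDiag with p.1 < p.2, w p.1 p.2) ^ 2 = ∏ j ∈ t, ∏ b ∈ t.erase j, w j b := by
  have hswap : ∏ p ∈ t.offDiag with p.1 < p.2, w p.1 p.2 =
      ∏ p ∈ t.offDiag with ¬p.1 < p.2, w p.1 p.2 :=
    prod_nbij' Prod.swap Prod.swap (by grind) (by grind) (fun _ _ => rfl) (fun _ _ => rfl)
      (fun _ _ => hw _ _)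
  rw [sq]
  nth_rw 2 [hswap]
  rw [prod_filter_mul_prod_filter_not]
  exact prod_finset_product' _ _ _ (by grind)

end PairProducts

theorem prod_Ico_mul_prod_Ico_of_overlap {M : Type*} [CommMonoid M] (f : ℕ → M) {a b c : ℕ}
    (hac : a ≤ c) (hcb : c < b) :
    (∏ m ∈ Ico a (c + 1), f m) * ∏ m ∈ Ico c b, f m = f c * ∏ m ∈ Ico a b, f m := by
  rw [prod_Ico_succ_top hac, mul_right_comm, prod_Ico_consecutive _ hac hcb.le, mul_comm]

/-- `chordSq n m = ‖1 - ζ ^ m‖ ^ 2` for `ζ = exp (2πi / n)`. -/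
noncomputable def chordSq (n m : ℕ) : ℝ := 4 * sin (π * m / n) ^ 2

theorem chordSq_pos {n m : ℕ} (hm : 0 < m) (hmn : m < n) : 0 < chordSq n m := by
  have hn : (0 : ℝ) < n := by exact_mod_cast hm.trans hmn
  have hlt : π * m / n < π := by
    rw [div_lt_iff₀ hn, mul_lt_mul_iff_right₀ pi_pos]
    exact_mod_cast hmn
  have := sin_pos_of_pos_of_lt_pi (by positivity) hlt
  unfold chordSq
  positivity

theorem chordSq_sub {n m : ℕ} (hm : m ≤ n) : chordSq n (n - m) = chordSq n m := by
  rcases (Nat.zero_le n).eq_or_lt with rfl | hn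
  · simp [chordSq]
  have : π * ((n - m : ℕ) : ℝ) / n = π - π * m / n := by
    rw [Nat.cast_sub hm]
    field_simp
  rw [chordSq, chordSq, this, sin_pi_sub]

theorem prod_Ico_chordSq_reflect (n : ℕ) {a b : ℕ} (hb : b ≤ n + 1) :
    ∏ m ∈ Ico a b, chordSq n m = ∏ m ∈ Ico (n + 1 - b) (n + 1 - a), chordSq n m := by
  rw [← prod_Ico_reflect _ _ hb]
  refine prod_congr rfl fun m hm => (chordSq_sub ?_).symm
  have := (mem_Ico.mp hm).2
  omega

theorem prod_Ico_one_chordSq {n : ℕ} (hn : 0 < n) :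
    ∏ m ∈ Ico 1 n, chordSq n m = (n : ℝ) ^ 2 := by
  obtain ⟨k, rfl⟩ : ∃ k, n = k + 1 := ⟨n - 1, by omega⟩
  have hprod := (Complex.isPrimitiveRoot_exp (k + 1) k.succ_ne_zero).prod_one_sub_pow_eq_order
  set ζ := Complex.exp (2 * π * Complex.I / (k + 1 : ℕ))
  have hchord (m : ℕ) : chordSq (k + 1) (m + 1) = ‖1 - ζ ^ (m + 1)‖ ^ 2 := by
    rw [← Complex.exp_nat_mul, norm_sub_rev, show ((m + 1 : ℕ) * (2 * π * Complex.I / (k + 1 : ℕ)))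
      = Complex.I * ((2 * π * (m + 1 : ℕ) / (k + 1 : ℕ) : ℝ) : ℂ) by push_cast; ring,
      Complex.norm_exp_I_mul_ofReal_sub_one, Real.norm_eq_abs, sq_abs, chordSq]
    ring_nf
  have hshift := prod_Ico_add' (chordSq (k + 1)) 0 k 1
  rw [zero_add, ← range_eq_Ico] at hshift
  rw [← hshift]
  simp only [hchord, prod_pow, ← norm_prod, hprod]
  norm_cast

theorem chordSq_two_mul_self {s : ℕ} (hs : s ≠ 0) : chordSq (2 * s) s = 4 := by
  have : π * s / ((2 * s : ℕ) : ℝ) = π / 2 := by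
    push_cast
    field_simp
  rw [chordSq, this, sin_pi_div_two]
  norm_num

theorem chordSq_mul_chordSq_sub {s j : ℕ} (hj : j ≤ s) :
    chordSq (2 * s) j * chordSq (2 * s) (s - j) = chordSq (2 * s) (2 * j) := by
  rcases (Nat.zero_le s).eq_or_lt with rfl | hs
  · simp [chordSq]
  have h₁ : π * ((s - j : ℕ) : ℝ) / ((2 * s : ℕ) : ℝ) = π / 2 - π * j / ((2 * s : ℕ) : ℝ) := by
    push_cast [hj]
    field_simp
  have h₂ : π * ((2 * j : ℕ) : ℝ) / ((2 * s : ℕ) : ℝ) = 2 * (π * j / ((2 * s : ℕ) : ℝ)) := by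
    push_cast
    ring
  rw [chordSq, chordSq, chordSq, h₁, h₂, sin_pi_div_two_sub, sin_two_mul]
  ring

theorem prod_Ico_succ_two_mul_chordSq (s : ℕ) :
    ∏ m ∈ Ico (s + 1) (2 * s), chordSq (2 * s) m = ∏ m ∈ Ico 1 s, chordSq (2 * s) m := by
  rw [prod_Ico_chordSq_reflect _ (by omega), show 2 * s + 1 - 2 * s = 1 by omega,
    show 2 * s + 1 - (s + 1) = s by omega]

theorem prod_Ico_one_chordSq_mul_prod_Ico_one_chordSq {s : ℕ} (hs : s ≠ 0) :
    (∏ m ∈ Ico 1 (s + 1), chordSq (2 * s) m) * ∏ m ∈ Ico 1 s, chordSq (2 * s) m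
      = (2 * s : ℝ) ^ 2 := by
  rw [← prod_Ico_succ_two_mul_chordSq, prod_Ico_consecutive _ (by omega) (by omega),
    prod_Ico_one_chordSq (by omega)]
  push_cast
  ring

noncomputable def pairWeight (s a b : ℕ) : ℝ :=
  16 * sin (π * ((a : ℝ) - (b : ℝ)) / (2 * s)) ^ 2 * sin (π * ((a : ℝ) + (b : ℝ)) / (2 * s)) ^ 2

theorem PiDs_eq_prod_pairWeight (s j : ℕ) :
    PiDs s j = ∏ p ∈ ((range (s + 1)).erase j).offDiag with p.1 < p.2, pairWeight s p.1 p.2 :=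
  rfl

theorem pairWeight_comm (s a b : ℕ) : pairWeight s a b = pairWeight s b a := by
  rw [pairWeight, pairWeight, add_comm (a : ℝ), ← neg_sub (b : ℝ), mul_neg, neg_div, sin_neg,
    neg_sq]

theorem pairWeight_nonneg (s a b : ℕ) : 0 ≤ pairWeight s a b := by
  unfold pairWeight
  positivity

theorem pairWeight_of_le {s a b : ℕ} (h : a ≤ b) :
    pairWeight s a b = chordSq (2 * s) (b - a) * chordSq (2 * s) (a + b) := by
  rw [pairWeight_comm, pairWeight, chordSq, chordSq]
  push_cast [h]
  ring_nf

noncomputable def incidentProd (s j : ℕ) : ℝ := ∏ b ∈ (range (s + 1)).erase j, pairWeight s j b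

theorem incidentProd_eq {s j : ℕ} (hj : j ≤ s) :
    incidentProd s j =
      (∏ m ∈ Ico 1 (j + 1), chordSq (2 * s) m) * (∏ m ∈ Ico j (2 * j), chordSq (2 * s) m) *
        ((∏ m ∈ Ico 1 (s + 1 - j), chordSq (2 * s) m) *
          ∏ m ∈ Ico (2 * j + 1) (s + j + 1), chordSq (2 * s) m) := by
  have hsplit : (range (s + 1)).erase j = Ico 0 j ∪ Ico (j + 1) (s + 1) := by
    ext b
    simp only [mem_erase, mem_range, mem_union, mem_Ico]
    omega
  have hdisj : Disjoint (Ico 0 j) (Ico (j + 1) (s + 1)) :=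
    Ico_disjoint_Ico_consecutive 0 j (s + 1) |>.mono_right (Ico_subset_Ico_left (by omega))
  have hbelow : ∏ b ∈ Ico 0 j, pairWeight s j b =
      (∏ m ∈ Ico 1 (j + 1), chordSq (2 * s) m) * ∏ m ∈ Ico j (2 * j), chordSq (2 * s) m := by
    rw [prod_congr rfl fun b hb => by rw [pairWeight_comm, pairWeight_of_le (mem_Ico.mp hb).2.le],
      prod_mul_distrib, prod_Ico_reflect _ _ (by omega), prod_Ico_add', zero_add, ← two_mul,
      Nat.add_sub_cancel_left, Nat.sub_zero]
  have habove : ∏ b ∈ Ico (j + 1) (s + 1), pairWeight s j b =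
      (∏ m ∈ Ico 1 (s + 1 - j), chordSq (2 * s) m) *
        ∏ m ∈ Ico (2 * j + 1) (s + j + 1), chordSq (2 * s) m := by
    rw [prod_congr rfl fun b (hb : b ∈ Ico (j + 1) (s + 1)) =>
        pairWeight_of_le (Nat.le_of_succ_le (mem_Ico.mp hb).1), prod_mul_distrib,
      show Ico (j + 1) (s + 1) = Ico (1 + j) (s + 1 - j + j) by congr 1 <;> omega,
      ← prod_Ico_add' _ 1 (s + 1 - j) j, ← prod_Ico_add' _ 1 (s + 1 - j) j]
    have hshift (x : ℕ) : j + (x + j) = x + 2 * j := by ring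
    simp only [Nat.add_sub_cancel, hshift]
    rw [prod_Ico_add' (chordSq (2 * s)), show 1 + 2 * j = 2 * j + 1 by ring,
      show s + 1 - j + 2 * j = s + j + 1 by omega]
  rw [incidentProd, hsplit, prod_union hdisj, hbelow, habove]

theorem incidentProd_of_pos_of_lt {s j : ℕ} (hj : 0 < j) (hjs : j < s) :
    incidentProd s j = (2 * s : ℝ) ^ 2 := by
  set F := chordSq (2 * s) with hF_def
  have hmid : (∏ m ∈ Ico j (2 * j), F m) * F (2 * j) * ∏ m ∈ Ico (2 * j + 1) (s + j + 1), F m =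
      (∏ m ∈ Ico j (s + 1), F m) * ∏ m ∈ Ico (s - j) s, F m := by
    rw [← prod_Ico_succ_top (by omega), prod_Ico_consecutive _ (by omega) (by omega),
      ← prod_Ico_consecutive _ (by omega : j ≤ s + 1) (by omega : s + 1 ≤ s + j + 1),
      prod_Ico_chordSq_reflect _ (by omega : s + j + 1 ≤ 2 * s + 1),
      show 2 * s + 1 - (s + j + 1) = s - j by omega, show 2 * s + 1 - (s + 1) = s by omega]
  have hF : 0 < F (2 * j) := chordSq_pos (by omega) (by omega)
  refine mul_right_cancel₀ hF.ne' ?_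
  calc incidentProd s j * F (2 * j)
      = ((∏ m ∈ Ico 1 (j + 1), F m) * ∏ m ∈ Ico j (s + 1), F m) *
          ((∏ m ∈ Ico 1 (s - j + 1), F m) * ∏ m ∈ Ico (s - j) s, F m) := by
        rw [incidentProd_eq hjs.le, ← hF_def, show s + 1 - j = s - j + 1 by omega]
        linear_combination (∏ m ∈ Ico 1 (j + 1), F m) * (∏ m ∈ Ico 1 (s - j + 1), F m) * hmid
    _ = F j * F (s - j) * ((∏ m ∈ Ico 1 (s + 1), F m) * ∏ m ∈ Ico 1 s, F m) := by
        rw [prod_Ico_mul_prod_Ico_of_overlap _ (by omega) (by omega),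
          prod_Ico_mul_prod_Ico_of_overlap _ (by omega) (by omega)]
        ring
    _ = (2 * s : ℝ) ^ 2 * F (2 * j) := by
        rw [chordSq_mul_chordSq_sub hjs.le,
          prod_Ico_one_chordSq_mul_prod_Ico_one_chordSq (by omega), mul_comm]

theorem incidentProd_zero {s : ℕ} (hs : s ≠ 0) : incidentProd s 0 = 4 * (2 * s : ℝ) ^ 2 := by
  rw [incidentProd_eq (Nat.zero_le s), ← prod_Ico_one_chordSq_mul_prod_Ico_one_chordSq hs,
    ← chordSq_two_mul_self hs]
  nth_rw 2 [prod_Ico_succ_top (by omega)]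
  simp only [Ico_self, prod_empty, mul_zero, Nat.sub_zero, zero_add, mul_one, one_mul]
  ring

theorem incidentProd_self {s : ℕ} (hs : s ≠ 0) : incidentProd s s = 4 * (2 * s : ℝ) ^ 2 := by
  rw [incidentProd_eq le_rfl, ← prod_Ico_one_chordSq_mul_prod_Ico_one_chordSq hs,
    ← chordSq_two_mul_self hs, prod_eq_prod_Ico_succ_bot (by omega : s < 2 * s),
    prod_Ico_succ_two_mul_chordSq, Nat.add_sub_cancel_left, ← two_mul]
  simp only [Ico_self, prod_empty, mul_one]
  ring

theorem prod_range_incidentProd {s : ℕ} (hs : s ≠ 0) :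
    ∏ j ∈ range (s + 1), incidentProd s j = (4 * (2 * s : ℝ) ^ (s + 1)) ^ 2 := by
  obtain ⟨k, rfl⟩ : ∃ k, s = k + 1 := ⟨s - 1, by omega⟩
  rw [prod_range_succ, prod_range_succ',
    prod_congr rfl fun i hi => incidentProd_of_pos_of_lt i.succ_pos (by simpa using hi),
    prod_const, card_range, incidentProd_zero hs, incidentProd_self hs]
  generalize (2 * ((k + 1 : ℕ) : ℝ)) = r
  ring

theorem prod_offDiag_lt_pairWeight {s : ℕ} (hs : s ≠ 0) :
    ∏ p ∈ (range (s + 1)).offDiag with p.1 < p.2, pairWeight s p.1 p.2 =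
      4 * (2 * s : ℝ) ^ (s + 1) := by
  refine (pow_left_inj₀ (prod_nonneg fun _ _ => pairWeight_nonneg ..) (by positivity)
    two_ne_zero).mp ?_
  rw [prod_offDiag_lt_sq (pairWeight_comm s), ← prod_range_incidentProd hs]
  rfl

theorem PiDs_mul_incidentProd {s j : ℕ} (hs : s ≠ 0) (hj : j ≤ s) :
    PiDs s j * incidentProd s j = 4 * (2 * s : ℝ) ^ (s + 1) := by
  rw [PiDs_eq_prod_pairWeight, incidentProd, ← prod_offDiag_lt_pairWeight hs,
    prod_offDiag_lt_eq_mul_prod_erase (pairWeight_comm s) (mem_range_succ_iff.mpr hj)]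

theorem four_mul_pow_div_PiDs {s j : ℕ} (hs : s ≠ 0) (hj : j ≤ s) :
    4 * (2 * s : ℝ) ^ s / PiDs s j = incidentProd s j / (2 * s) := by
  have h := PiDs_mul_incidentProd hs hj
  have hPi : PiDs s j ≠ 0 := left_ne_zero_of_mul (by rw [h]; positivity)
  rw [div_eq_div_iff hPi (by positivity), mul_comm _ (PiDs s j), h, pow_succ]
  ring

theorem four_mul_pow_div_PiDs_of_pos_of_lt {s j : ℕ} (hj : 0 < j) (hjs : j < s) :
    4 * (2 * s : ℝ) ^ s / PiDs s j = 2 * s := by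
  rw [four_mul_pow_div_PiDs (by omega) hjs.le, incidentProd_of_pos_of_lt hj hjs]
  field_simp

theorem four_mul_pow_div_PiDs_of_eq_zero_or_eq {s j : ℕ} (hs : s ≠ 0) (hj : j = 0 ∨ j = s) :
    4 * (2 * s : ℝ) ^ s / PiDs s j = 2 ^ 2 * (2 * s) := by
  have hE : incidentProd s j = 4 * (2 * s : ℝ) ^ 2 := by
    rcases hj with rfl | rfl
    exacts [incidentProd_zero hs, incidentProd_self hs]
  rw [four_mul_pow_div_PiDs hs (by omega), hE]
  field_simp
  norm_num

/-- the Verlinde number `N_2(SO_{2s})` equals `r^g` where `r = 2s`: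
`2·[ Σ_{j=1}^{s−1} (4·r^s/Π_j)^{g−1} + 2^{1−2g}·((4·r^s/Π_0)^{g−1} + (4·r^s/Π_s)^{g−1}) ] = r^g`. -/
theorem verlinde_SO_even (s g : ℕ) (hs : 3 ≤ s) (hg : 2 ≤ g) :
    2 * ((∑ j ∈ Finset.Icc 1 (s - 1),
          (4 * (2 * (s : ℝ)) ^ s / PiDs s j) ^ (g - 1)) +
        (2 : ℝ) ^ (1 - 2 * (g : ℤ)) *
          ((4 * (2 * (s : ℝ)) ^ s / PiDs s 0) ^ (g - 1) +
            (4 * (2 * (s : ℝ)) ^ s / PiDs s s) ^ (g - 1))) =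
      (2 * (s : ℝ)) ^ g := by
  have hs0 : s ≠ 0 := by omega
  have hmid : ∀ j ∈ Icc 1 (s - 1), (4 * (2 * (s : ℝ)) ^ s / PiDs s j) ^ (g - 1) =
      (2 * (s : ℝ)) ^ (g - 1) := fun j hj => by
    obtain ⟨h1, h2⟩ := mem_Icc.mp hj
    rw [four_mul_pow_div_PiDs_of_pos_of_lt h1 (by omega)]
  rw [sum_congr rfl hmid, sum_const, Nat.card_Icc, Nat.add_sub_cancel, nsmul_eq_mul,
    Nat.cast_pred (by omega), four_mul_pow_div_PiDs_of_eq_zero_or_eq hs0 (.inl rfl),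
    four_mul_pow_div_PiDs_of_eq_zero_or_eq hs0 (.inr rfl)]
  obtain ⟨k, rfl⟩ : ∃ k, g = k + 1 := ⟨g - 1, by omega⟩
  rw [show (1 - 2 * ((k + 1 : ℕ) : ℤ)) = -((2 * k + 1 : ℕ) : ℤ) by push_cast; ring, zpow_neg,
    zpow_natCast, Nat.add_sub_cancel, mul_pow (2 ^ 2 : ℝ), ← pow_mul]
  field_simp
  ring
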